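/- Let p ≥ 2 and let Q_wh = {z ∈ {0,1}^p : z_p ≤ ∑_{i=1}^{p−1} z_i}. Then conv(Q_wh \ {0}) = {z ∈ [0,1]^p : ∑_{i=1}^{p−1} z_i ≥ 1}. -/

import Mathlib

/-!
Let `A = [p-1]`. The set `T = {z ∈ [0,1]^p : ∑_{i ∈ A} z_i ≥ 1}` is compact and convex, and its
binary points are exactly `Q_wh \ {0}`. By Krein–Milman, `T` is the convex hull of its extreme
points, so it suffices that these are binary. At a fractional coordinate `z_j` of a point of `T`
one can move `z` both ways along `e_j` unless `j ∈ A` and `∑_{i ∈ A} z_i = 1`; in that case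
`∑_{i ∈ A, i ≠ j} z_i = 1 - z_j ∈ (0,1)`, so some other `z_k` with `k ∈ A` is fractional and `z`
moves both ways along `e_j - e_k`.
-/

open Finset

theorem sum_eq_zero_or_one_le_sum {ι : Type*} {s : Finset ι} {f : ι → ℝ}
    (hf : ∀ i ∈ s, f i = 0 ∨ f i = 1) : ∑ i ∈ s, f i = 0 ∨ 1 ≤ ∑ i ∈ s, f i := by
  by_cases hone : ∃ i ∈ s, f i = 1
  · obtain ⟨i, hi, hfi⟩ := hone
    have hnonneg : ∀ j ∈ s, 0 ≤ f j := fun j hj => by rcases hf j hj with h | h <;> simp [h]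
    exact Or.inr (hfi ▸ single_le_sum hnonneg hi)
  · push Not at hone
    exact Or.inl (sum_eq_zero fun i hi => (hf i hi).resolve_right (hone i hi))

theorem eq_zero_of_add_mem_of_sub_mem_of_mem_extremePoints {𝕜 E : Type*} [Field 𝕜]
    [LinearOrder 𝕜] [IsStrictOrderedRing 𝕜] [AddCommGroup E] [Module 𝕜 E] {K : Set E} {x v : E}
    (hx : x ∈ K.extremePoints 𝕜) (hadd : x + v ∈ K) (hsub : x - v ∈ K) : v = 0 := by
  have hmem : x ∈ openSegment 𝕜 (x + v) (x - v) :=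
    ⟨1 / 2, 1 / 2, by norm_num, by norm_num, by norm_num, by module⟩
  simpa using hx.2 hadd hsub hmem

theorem convexHull_eq_of_extremePoints_subset {E : Type*} [AddCommGroup E] [Module ℝ E]
    [TopologicalSpace E] [T2Space E] [IsTopologicalAddGroup E] [ContinuousSMul ℝ E]
    [LocallyConvexSpace ℝ E] {K S : Set E} (hK : IsCompact K) (hKconv : Convex ℝ K)
    (hS : S.Finite) (hSK : S ⊆ K) (hext : K.extremePoints ℝ ⊆ S) : convexHull ℝ S = K :=
  (convexHull_min hSK hKconv).antisymm <| calc
    K = closure (convexHull ℝ (K.extremePoints ℝ)) :=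
      (closure_convexHull_extremePoints hK hKconv).symm
    _ ⊆ closure (convexHull ℝ S) := closure_mono (convexHull_mono hext)
    _ = convexHull ℝ S := (hS.isClosed_convexHull (𝕜 := ℝ)).closure_eq

section Cube

variable {ι : Type*}

def cubeSumGeOne (A : Finset ι) : Set (ι → ℝ) :=
  {z | (∀ i, z i ∈ Set.Icc (0 : ℝ) 1) ∧ 1 ≤ ∑ i ∈ A, z i}

def weakHierarchy [Fintype ι] [DecidableEq ι] (l : ι) : Set (ι → ℝ) :=
  {z | (∀ i, z i = 0 ∨ z i = 1) ∧ z l ≤ ∑ i ∈ univ.erase l, z i}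

theorem convex_cubeSumGeOne (A : Finset ι) : Convex ℝ (cubeSumGeOne A) := by
  intro x hx y hy a b ha hb hab
  refine ⟨fun i => convex_Icc (0 : ℝ) 1 (hx.1 i) (hy.1 i) ha hb hab, ?_⟩
  calc (1 : ℝ) = a * 1 + b * 1 := by rw [mul_one, mul_one, hab]
    _ ≤ a * ∑ i ∈ A, x i + b * ∑ i ∈ A, y i := by gcongr; exacts [hx.2, hy.2]
    _ = ∑ i ∈ A, (a • x + b • y) i := by simp [sum_add_distrib, mul_sum]

theorem isCompact_cubeSumGeOne (A : Finset ι) : IsCompact (cubeSumGeOne A) := by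
  have hclosed : IsClosed (cubeSumGeOne A) := by
    have hcube : IsClosed {z : ι → ℝ | ∀ i, z i ∈ Set.Icc (0 : ℝ) 1} := by
      rw [Set.ofPred_forall]
      exact isClosed_iInter fun i => isClosed_Icc.preimage (continuous_apply i)
    exact hcube.inter
      (isClosed_le continuous_const (continuous_finsetSum _ fun i _ => continuous_apply i))
  exact isCompact_Icc.of_isClosed_subset hclosed
    fun z hz => ⟨fun i => (hz.1 i).1, fun i => (hz.1 i).2⟩

variable {A : Finset ι} {z : ι → ℝ}

theorem eq_zero_of_mem_extremePoints_cubeSumGeOne (hz : z ∈ (cubeSumGeOne A).extremePoints ℝ)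
    {δ : ι → ℝ} (hδ : ∀ i, |δ i| ≤ min (z i) (1 - z i))
    (hsum : |∑ i ∈ A, δ i| ≤ ∑ i ∈ A, z i - 1) : δ = 0 := by
  have hcoord : ∀ i, z i + δ i ∈ Set.Icc (0 : ℝ) 1 ∧ z i - δ i ∈ Set.Icc (0 : ℝ) 1 := fun i => by
    obtain ⟨hz0, hz1⟩ := le_min_iff.1 (hδ i)
    refine ⟨⟨?_, ?_⟩, ?_, ?_⟩ <;> linarith [neg_abs_le (δ i), le_abs_self (δ i)]
  have ⟨hslo, hshi⟩ := abs_le.1 hsum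
  refine eq_zero_of_add_mem_of_sub_mem_of_mem_extremePoints hz
    ⟨fun i => (hcoord i).1, ?_⟩ ⟨fun i => (hcoord i).2, ?_⟩
  · simp only [Pi.add_apply, sum_add_distrib]; linarith
  · simp only [Pi.sub_apply, sum_sub_distrib]; linarith

theorem abs_pi_single_le_min [DecidableEq ι] (hz : ∀ i, z i ∈ Set.Icc (0 : ℝ) 1) {j : ι} {c : ℝ}
    (hc0 : 0 ≤ c) (hc : c ≤ min (z j) (1 - z j)) (i : ι) :
    |(Pi.single j c : ι → ℝ) i| ≤ min (z i) (1 - z i) := by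
  rcases eq_or_ne i j with rfl | hij
  · simpa [abs_of_nonneg hc0] using hc
  · simpa [hij] using le_min (hz i).1 (sub_nonneg.2 (hz i).2)

theorem abs_pi_single_sub_pi_single_le_min [DecidableEq ι] (hz : ∀ i, z i ∈ Set.Icc (0 : ℝ) 1)
    {j k : ι} (hjk : j ≠ k) {c : ℝ} (hc0 : 0 ≤ c) (hcj : c ≤ min (z j) (1 - z j))
    (hck : c ≤ min (z k) (1 - z k)) (i : ι) :
    |(Pi.single j c - Pi.single k c : ι → ℝ) i| ≤ min (z i) (1 - z i) := by
  rcases eq_or_ne i j with rfl | hij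
  · simpa [hjk] using abs_pi_single_le_min hz hc0 hcj i
  · simpa [hij] using abs_pi_single_le_min hz hc0 hck i

theorem eq_zero_or_eq_one_of_mem_extremePoints_cubeSumGeOne
    (hz : z ∈ (cubeSumGeOne A).extremePoints ℝ) (j : ι) : z j = 0 ∨ z j = 1 := by
  classical
  obtain ⟨hcube, hge⟩ := hz.1
  have hslack_pos : ∀ i, ¬(z i = 0 ∨ z i = 1) → 0 < min (z i) (1 - z i) := fun i hi => by
    push Not at hi
    exact lt_min ((hcube i).1.lt_of_ne' hi.1) (sub_pos.2 ((hcube i).2.lt_of_ne hi.2))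
  by_contra hj
  set ε := min (z j) (1 - z j)
  have hε : 0 < ε := hslack_pos j hj
  have hjA : j ∈ A := by
    by_contra hjA
    have h := eq_zero_of_mem_extremePoints_cubeSumGeOne hz
      (abs_pi_single_le_min hcube hε.le le_rfl)
      (by simpa [sum_pi_single', hjA] using hge)
    simpa [hε.ne'] using congrFun h j
  have htight : ∑ i ∈ A, z i = 1 := by
    by_contra hne
    set η := min ε (∑ i ∈ A, z i - 1)
    have hη : 0 < η := lt_min hε (sub_pos.2 (hge.lt_of_ne' hne))
    have h := eq_zero_of_mem_extremePoints_cubeSumGeOne hz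
      (abs_pi_single_le_min hcube hη.le (min_le_left _ _))
      (by rw [sum_pi_single', if_pos hjA, abs_of_pos hη]; exact min_le_right _ _)
    simpa [hη.ne'] using congrFun h j
  obtain ⟨k, hkA, hk⟩ : ∃ k ∈ A.erase j, ¬(z k = 0 ∨ z k = 1) := by
    by_contra! hbin
    have hrest : ∑ i ∈ A.erase j, z i = 1 - z j := by
      rw [← add_sum_erase A z hjA] at htight; linarith
    rcases sum_eq_zero_or_one_le_sum hbin with h | h
    · exact hj (Or.inr (by linarith))
    · exact hj (Or.inl (by linarith [(hcube j).1]))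
  obtain ⟨hkj, hkA⟩ := mem_erase.1 hkA
  set η := min ε (min (z k) (1 - z k))
  have hη : 0 < η := lt_min hε (hslack_pos k hk)
  have h := eq_zero_of_mem_extremePoints_cubeSumGeOne hz
    (abs_pi_single_sub_pi_single_le_min hcube hkj.symm hη.le (min_le_left _ _) (min_le_right _ _))
    (by simp [sum_sub_distrib, sum_pi_single', hjA, hkA, htight])
  simpa [hkj.symm, hη.ne'] using congrFun h j

theorem convexHull_binary_cubeSumGeOne [Finite ι] (A : Finset ι) :
    convexHull ℝ {z ∈ cubeSumGeOne A | ∀ i, z i = 0 ∨ z i = 1} = cubeSumGeOne A := by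
  have hfin : {z ∈ cubeSumGeOne A | ∀ i, z i = 0 ∨ z i = 1}.Finite :=
    (Set.Finite.pi (t := fun _ => ({0, 1} : Set ℝ)) fun _ => by simp).subset
      fun z hz i _ => hz.2 i
  exact convexHull_eq_of_extremePoints_subset (isCompact_cubeSumGeOne A) (convex_cubeSumGeOne A)
    hfin (Set.sep_subset _ _)
    fun z hz => ⟨hz.1, eq_zero_or_eq_one_of_mem_extremePoints_cubeSumGeOne hz⟩

theorem weakHierarchy_diff_zero [Fintype ι] [DecidableEq ι] (l : ι) :
    weakHierarchy l \ {0} = {z ∈ cubeSumGeOne (univ.erase l) | ∀ i, z i = 0 ∨ z i = 1} := by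
  ext z
  simp only [weakHierarchy, cubeSumGeOne, Set.mem_sdiff, Set.mem_ofPred_eq, Set.mem_singleton_iff]
  constructor
  · rintro ⟨⟨hbin, hle⟩, hne⟩
    have hcube : ∀ i, z i ∈ Set.Icc (0 : ℝ) 1 := fun i => by rcases hbin i with h | h <;> simp [h]
    refine ⟨⟨hcube, ?_⟩, hbin⟩
    rcases sum_eq_zero_or_one_le_sum fun i _ => hbin i with hsum | hsum
    · have hrest := (sum_eq_zero_iff_of_nonneg fun i _ => (hcube i).1).1 hsum
      refine absurd (funext fun i => ?_) hne
      rcases eq_or_ne i l with rfl | hil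
      · exact le_antisymm (hle.trans_eq hsum) (hcube i).1
      · exact hrest i (mem_erase.2 ⟨hil, mem_univ i⟩)
    · exact hsum
  · rintro ⟨⟨hcube, hsum⟩, hbin⟩
    refine ⟨⟨hbin, (hcube l).2.trans hsum⟩, ?_⟩
    rintro rfl
    simp only [Pi.zero_apply, sum_const_zero] at hsum
    linarith

theorem convexHull_weakHierarchy_diff_zero [Fintype ι] [DecidableEq ι] (l : ι) :
    convexHull ℝ (weakHierarchy l \ {0}) = cubeSumGeOne (univ.erase l) := by
  rw [weakHierarchy_diff_zero, convexHull_binary_cubeSumGeOne]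

end Cube

/-- Lemma: the convex hull of `Q_wh \ {0}`, where
`Q_wh = {z ∈ {0,1}^p : z_p ≤ ∑_{i ∈ [p-1]} z_i}`, equals
`{z ∈ [0,1]^p : ∑_{i ∈ [p-1]} z_i ≥ 1}`. -/
theorem statement12 (p : ℕ) (hp : 2 ≤ p) :
    convexHull ℝ
        ({z : Fin p → ℝ | (∀ i, z i = 0 ∨ z i = 1) ∧
            z ⟨p - 1, by omega⟩ ≤ ∑ i ∈ Finset.univ.erase ⟨p - 1, by omega⟩, z i} \ {0}) =
      {z : Fin p → ℝ |
        (∀ i, z i ∈ Set.Icc (0 : ℝ) 1) ∧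
        1 ≤ ∑ i ∈ Finset.univ.erase ⟨p - 1, by omega⟩, z i} :=
  convexHull_weakHierarchy_diff_zero _
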